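/- arXiv:1810.12195 — 8 statements merged into one kernel-verified Lean document; each statement's English description precedes it below -/
import Mathlib

section
/- Let n be a positive integer, b > 0, c ∈ ℝⁿ with c_i > 0 for all i, and let Y = {y ∈ ℝⁿ | Σ_i y_i ≤ b and 0 ≤ y_i ≤ c_i for all i}. Let z ∈ ℝⁿ and suppose λ ≥ 0 is such that the vector y defined by y_i = min(max(z_i − λ, 0), c_i) for all i satisfies Σ_i y_i ≤ b and λ·(Σ_i y_i − b) = 0. Then y is the Euclidean projection of z onto Y, i.e., for every w ∈ Y, ‖y − z‖₂ ≤ ‖w − z‖₂, with equality only if w = y. -/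
/-!
Coordinatewise, `y i` is the projection of `z i - lam` onto `[0, c i]`, so
`(z i - y i) * (w i - y i) ≤ lam * (w i - y i)` for every feasible `w`. Summing and using
complementary slackness together with `∑ w ≤ b` gives the variational inequality
`⟪z - y, w - y⟫ ≤ 0`, and then `‖y - z‖² + ‖w - y‖² ≤ ‖w - z‖²`.
-/

open Finset RealInnerProductSpace

theorem sub_mul_sub_clip_nonpos {t c w : ℝ} (hw₀ : 0 ≤ w) (hwc : w ≤ c) :
    (t - min (max t 0) c) * (w - min (max t 0) c) ≤ 0 := by
  have hc : 0 ≤ c := hw₀.trans hwc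
  rcases le_total t 0 with ht₀ | ht₀
  · rw [max_eq_right ht₀, min_eq_left hc]; nlinarith
  rcases le_total t c with htc | htc
  · rw [max_eq_left ht₀, min_eq_left htc]; simp
  · rw [max_eq_left ht₀, min_eq_right htc]; nlinarith

section InnerProductSpace

variable {E : Type*} [NormedAddCommGroup E] [InnerProductSpace ℝ E] {y z w : E}

theorem norm_sub_sq_add_norm_sub_sq_le_of_inner_nonpos (h : ⟪z - y, w - y⟫ ≤ 0) :
    ‖y - z‖ ^ 2 + ‖w - y‖ ^ 2 ≤ ‖w - z‖ ^ 2 := by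
  have : w - z = (w - y) - (z - y) := by abel
  rw [this, norm_sub_sq_real (w - y) (z - y), norm_sub_rev y z, real_inner_comm]
  linarith

theorem norm_sub_le_and_eq_imp_of_inner_nonpos (h : ⟪z - y, w - y⟫ ≤ 0) :
    ‖y - z‖ ≤ ‖w - z‖ ∧ (‖y - z‖ = ‖w - z‖ → w = y) := by
  have hpyth := norm_sub_sq_add_norm_sub_sq_le_of_inner_nonpos h
  constructor
  · exact (pow_le_pow_iff_left₀ (norm_nonneg _) (norm_nonneg _) two_ne_zero).mp
      (by nlinarith [sq_nonneg ‖w - y‖])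
  · intro heq
    rw [heq] at hpyth
    have hsq : ‖w - y‖ ^ 2 = 0 := le_antisymm (by linarith) (sq_nonneg _)
    exact sub_eq_zero.mp (norm_eq_zero.mp (pow_eq_zero_iff two_ne_zero |>.mp hsq))

end InnerProductSpace

theorem projection_characterization_general
    (n : ℕ) (b : ℝ)
    (c : EuclideanSpace ℝ (Fin n))
    (z : EuclideanSpace ℝ (Fin n)) (lam : ℝ) (hlam : 0 ≤ lam)
    (y : EuclideanSpace ℝ (Fin n))
    (hy : ∀ i, y i = min (max (z i - lam) 0) (c i))
    (hslack : lam * ((∑ i, y i) - b) = 0) :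
    ∀ w : EuclideanSpace ℝ (Fin n),
      (∑ i, w i ≤ b ∧ ∀ i, 0 ≤ w i ∧ w i ≤ c i) →
        ‖y - z‖ ≤ ‖w - z‖ ∧ (‖y - z‖ = ‖w - z‖ → w = y) := by
  rintro w ⟨hwb, hw⟩
  apply norm_sub_le_and_eq_imp_of_inner_nonpos
  have hcoord (i : Fin n) : (z i - y i) * (w i - y i) ≤ lam * (w i - y i) := by
    have := sub_mul_sub_clip_nonpos (t := z i - lam) (hw i).1 (hw i).2
    rw [← hy i] at this
    linarith
  calc ⟪z - y, w - y⟫ = ∑ i, (z i - y i) * (w i - y i) := by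
        simp [PiLp.inner_apply, mul_comm]
    _ ≤ ∑ i, lam * (w i - y i) := sum_le_sum fun i _ => hcoord i
    _ = lam * ((∑ i, w i) - b) - lam * ((∑ i, y i) - b) := by
        rw [← mul_sum, sum_sub_distrib]; ring
    _ ≤ 0 := by
        rw [hslack, sub_zero]
        exact mul_nonpos_of_nonneg_of_nonpos hlam (by linarith)

/-- If `λ ≥ 0` and `y i = min (max (z i − λ) 0) (c i)` satisfies `∑ y ≤ b` and the
complementary slackness condition `λ·(∑ y − b) = 0`, then `y` is the Euclidean
projection of `z` onto `Y = {y | ∑ y ≤ b, 0 ≤ y i ≤ c i}`. -/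
theorem projection_characterization
    (n : ℕ) (hn : 0 < n) (b : ℝ) (hb : 0 < b)
    (c : EuclideanSpace ℝ (Fin n)) (hc : ∀ i, 0 < c i)
    (z : EuclideanSpace ℝ (Fin n)) (lam : ℝ) (hlam : 0 ≤ lam)
    (y : EuclideanSpace ℝ (Fin n))
    (hy : ∀ i, y i = min (max (z i - lam) 0) (c i))
    (hsum : ∑ i, y i ≤ b)
    (hslack : lam * ((∑ i, y i) - b) = 0) :
    ∀ w : EuclideanSpace ℝ (Fin n),
      (∑ i, w i ≤ b ∧ ∀ i, 0 ≤ w i ∧ w i ≤ c i) →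
        ‖y - z‖ ≤ ‖w - z‖ ∧ (‖y - z‖ = ‖w - z‖ → w = y) :=
  projection_characterization_general n b c z lam hlam y hy hslack
end

section
/- Let n be a positive integer, b > 0, and z, c ∈ ℝⁿ with z_i ≥ 0 and c_i > 0 for all i. If g(0) = Σ_{i=1}^n min(z_i, c_i) > b, then there exists λ > 0 such that g(λ) = b, where g(λ) = Σ_{i=1}^n min(max(z_i − λ, 0), c_i). -/
/-- If `g(0) = ∑ i, min (z i) (c i) > b > 0` with `z i ≥ 0` and `c i > 0`,
then there exists `λ > 0` with `g(λ) = b`. -/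
theorem exists_lam_eq_budget (n : ℕ) (hn : 0 < n) (b : ℝ) (hb : 0 < b)
    (z c : Fin n → ℝ) (hz : ∀ i, 0 ≤ z i) (hc : ∀ i, 0 < c i)
    (h0 : b < ∑ i, min (z i) (c i)) :
    ∃ lam : ℝ, 0 < lam ∧ ∑ i, min (max (z i - lam) 0) (c i) = b := by
  set g : ℝ → ℝ := fun lam => ∑ i, min (max (z i - lam) 0) (c i) with hg
  set M : ℝ := 1 + ∑ i, z i with hM
  have hsum : (0:ℝ) ≤ ∑ i, z i := Finset.sum_nonneg fun i _ => hz i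
  have hMpos : 0 < M := by rw [hM]; linarith
  have hgM : g M = 0 := by
    apply Finset.sum_eq_zero
    intro i _
    have hzi : z i ≤ ∑ j, z j := Finset.single_le_sum (fun j _ => hz j) (Finset.mem_univ i)
    have h1 : z i - M ≤ 0 := by rw [hM]; linarith
    rw [max_eq_right h1, min_eq_left (le_of_lt (hc i))]
  have hg0 : g 0 = ∑ i, min (z i) (c i) := by
    apply Finset.sum_congr rfl
    intro i _
    rw [sub_zero, max_eq_left (hz i)]
  have hcont : ContinuousOn g (Set.Icc 0 M) := by
    apply Continuous.continuousOn
    apply continuous_finset_sum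
    intro i _
    exact ((continuous_const.sub continuous_id).max continuous_const).min continuous_const
  have key := intermediate_value_Ioo' (le_of_lt hMpos) hcont
  have hbmem : b ∈ Set.Ioo (g M) (g 0) := by
    constructor
    · rw [hgM]; exact hb
    · rw [hg0]; exact h0
  obtain ⟨lam, hlam, heq⟩ := key hbmem
  exact ⟨lam, hlam.1, heq⟩
end

section
/- Let n be a positive integer, b > 0, c ∈ ℝⁿ with c_i > 0 for all i, and let Y = {y ∈ ℝⁿ | Σ_i y_i ≤ b and 0 ≤ y_i ≤ c_i for all i}. For every z ∈ ℝⁿ with z_i ≥ 0 for all i, there exists λ ≥ 0 such that the vector y given by y_i = min(max(z_i − λ, 0), c_i) for all i satisfies Σ_i y_i ≤ b, satisfies λ·(Σ_i y_i − b) = 0, and is the Euclidean projection of z onto Y. -/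
/-!
Let `y(λ)` clip `z - λ` coordinatewise to the box `[0, c]`. The total mass `∑ y(λ)` is continuous
in `λ`, and vanishes once `λ ≥ ∑ z`; if it exceeds `b` at `λ = 0`, the intermediate value theorem
gives `λ > 0` with mass exactly `b`. For such `λ` each coordinate satisfies
`(z - y) (w - y) ≤ λ (w - y)` whenever `0 ≤ w ≤ c`, so summing and using `∑ w ≤ b` and
complementary slackness gives `⟪w - y, z - y⟫ ≤ 0`: the variational inequality characterising the
projection onto a convex set.
-/

open Finset

theorem exists_nonneg_le_and_mul_sub_eq_zero {f : ℝ → ℝ} (hf : Continuous f) {b M : ℝ}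
    (hM : 0 ≤ M) (hfM : f M ≤ b) :
    ∃ lam, 0 ≤ lam ∧ f lam ≤ b ∧ lam * (f lam - b) = 0 := by
  by_cases h0 : f 0 ≤ b
  · exact ⟨0, le_rfl, h0, zero_mul _⟩
  obtain ⟨lam, hlam, hflam⟩ :=
    intermediate_value_Icc' hM hf.continuousOn ⟨hfM, (not_le.mp h0).le⟩
  exact ⟨lam, hlam.1, hflam.le, by rw [hflam, sub_self, mul_zero]⟩

/-- Coordinatewise KKT condition: `λ` is the multiplier of the constraint `∑ y ≤ b`. -/
theorem sub_mul_sub_le_of_clip {z c lam w : ℝ} (hw0 : 0 ≤ w) (hwc : w ≤ c) :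
    (z - min (max (z - lam) 0) c) * (w - min (max (z - lam) 0) c)
      ≤ lam * (w - min (max (z - lam) 0) c) := by
  rcases le_total (z - lam) 0 with h0 | h0
  · rw [max_eq_right h0, min_eq_left (hw0.trans hwc)]
    nlinarith
  rcases le_total (z - lam) c with hc | hc
  · rw [max_eq_left h0, min_eq_left hc]
    exact le_of_eq (by ring)
  · rw [max_eq_left h0, min_eq_right hc]
    nlinarith

theorem norm_sub_le_of_inner_sub_nonpos {E : Type*} [NormedAddCommGroup E]
    [InnerProductSpace ℝ E] {y z w : E} (h : inner ℝ (w - y) (z - y) ≤ 0) :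
    ‖y - z‖ ≤ ‖w - z‖ ∧ (‖y - z‖ = ‖w - z‖ → w = y) := by
  have hpyth : ‖w - y‖ ^ 2 + ‖y - z‖ ^ 2 ≤ ‖w - z‖ ^ 2 := by
    rw [← sub_sub_sub_cancel_right w z y, norm_sub_sq_real (w - y), norm_sub_rev y z]
    linarith
  refine ⟨?_, fun heq => ?_⟩
  · exact (sq_le_sq₀ (norm_nonneg _) (norm_nonneg _)).mp (by nlinarith [sq_nonneg ‖w - y‖])
  · rw [heq] at hpyth
    have : ‖w - y‖ = 0 := by nlinarith [norm_nonneg (w - y)]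
    exact sub_eq_zero.mp (norm_eq_zero.mp this)

theorem exists_projection_lam_general
    (n : ℕ) (b : ℝ) (hb : 0 < b)
    (c : EuclideanSpace ℝ (Fin n)) (hc : ∀ i, 0 < c i)
    (z : EuclideanSpace ℝ (Fin n)) (hz : ∀ i, 0 ≤ z i) :
    ∃ lam : ℝ, 0 ≤ lam ∧ ∃ y : EuclideanSpace ℝ (Fin n),
      (∀ i, y i = min (max (z i - lam) 0) (c i)) ∧
      (∑ i, y i ≤ b) ∧
      (lam * ((∑ i, y i) - b) = 0) ∧
      (∀ w : EuclideanSpace ℝ (Fin n),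
        (∑ i, w i ≤ b ∧ ∀ i, 0 ≤ w i ∧ w i ≤ c i) →
          ‖y - z‖ ≤ ‖w - z‖ ∧ (‖y - z‖ = ‖w - z‖ → w = y)) := by
  set clip : ℝ → EuclideanSpace ℝ (Fin n) :=
    fun lam => WithLp.toLp 2 fun i => min (max (z i - lam) 0) (c i) with hclip
  have hmass_cont : Continuous fun lam => ∑ i, clip lam i := by
    simp only [hclip]
    fun_prop
  have hmass_top : ∑ i, clip (∑ j, z j) i = 0 := by
    refine sum_eq_zero fun i _ => ?_
    have hzi : z i - ∑ j, z j ≤ 0 := sub_nonpos.mpr (single_le_sum (fun j _ => hz j) (mem_univ i))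
    simp [hclip, max_eq_right hzi, (hc i).le]
  obtain ⟨lam, hlam, hle, hslack⟩ := exists_nonneg_le_and_mul_sub_eq_zero hmass_cont
    (sum_nonneg fun i _ => hz i) (hmass_top.trans_le hb.le)
  refine ⟨lam, hlam, clip lam, fun i => rfl, hle, hslack, fun w ⟨hwb, hw⟩ =>
    norm_sub_le_of_inner_sub_nonpos ?_⟩
  calc inner ℝ (w - clip lam) (z - clip lam)
      = ∑ i, (z i - clip lam i) * (w i - clip lam i) := by simp [PiLp.inner_apply]
    _ ≤ ∑ i, lam * (w i - clip lam i) :=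
      sum_le_sum fun i _ => sub_mul_sub_le_of_clip (hw i).1 (hw i).2
    _ = lam * (∑ i, w i - b) - lam * (∑ i, clip lam i - b) := by
      rw [← mul_sum, sum_sub_distrib]; ring
    _ ≤ 0 := by
      rw [hslack, sub_zero]
      exact mul_nonpos_of_nonneg_of_nonpos hlam (sub_nonpos.mpr hwb)

/-- For every `z` with nonnegative entries there exists `λ ≥ 0` such that
`y i = min (max (z i − λ) 0) (c i)` satisfies `∑ y ≤ b`, the complementary
slackness condition `λ·(∑ y − b) = 0`, and `y` is the Euclidean projection of
`z` onto `Y = {y | ∑ y ≤ b, 0 ≤ y i ≤ c i}`. -/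
theorem exists_projection_lam
    (n : ℕ) (hn : 0 < n) (b : ℝ) (hb : 0 < b)
    (c : EuclideanSpace ℝ (Fin n)) (hc : ∀ i, 0 < c i)
    (z : EuclideanSpace ℝ (Fin n)) (hz : ∀ i, 0 ≤ z i) :
    ∃ lam : ℝ, 0 ≤ lam ∧ ∃ y : EuclideanSpace ℝ (Fin n),
      (∀ i, y i = min (max (z i - lam) 0) (c i)) ∧
      (∑ i, y i ≤ b) ∧
      (lam * ((∑ i, y i) - b) = 0) ∧
      (∀ w : EuclideanSpace ℝ (Fin n),
        (∑ i, w i ≤ b ∧ ∀ i, 0 ≤ w i ∧ w i ≤ c i) →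
          ‖y - z‖ ≤ ‖w - z‖ ∧ (‖y - z‖ = ‖w - z‖ → w = y)) :=
  exists_projection_lam_general n b hb c hc z hz
end

section
/- Let n be a positive integer, b ∈ ℝ, and z, c ∈ ℝⁿ with c_i > 0 for all i. Suppose λ ∈ ℝ satisfies g(λ) = b, where g(λ) = Σ_{i=1}^n min(max(z_i − λ, 0), c_i). Let A = {i | z_i − λ ≥ c_i} and B = {i | 0 < z_i − λ < c_i}, and suppose B is nonempty. Then λ = (Σ_{i∈A} c_i + Σ_{i∈B} z_i − b) / |B|. -/
open Finset in
/-- If `g(λ) = b`, `A = {i | z i − λ ≥ c i}`, `B = {i | 0 < z i − λ < c i}` and `B ≠ ∅`,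
then `λ = (∑_{i∈A} c i + ∑_{i∈B} z i − b) / |B|`. -/
theorem lam_formula (n : ℕ) (hn : 0 < n) (b : ℝ) (z c : Fin n → ℝ)
    (hc : ∀ i, 0 < c i) (lam : ℝ)
    (hg : ∑ i, min (max (z i - lam) 0) (c i) = b)
    (A B : Finset (Fin n))
    (hA : A = Finset.univ.filter (fun i => c i ≤ z i - lam))
    (hB : B = Finset.univ.filter (fun i => 0 < z i - lam ∧ z i - lam < c i))
    (hBne : B.Nonempty) :
    lam = ((∑ i ∈ A, c i) + (∑ i ∈ B, z i) - b) / (B.card : ℝ) := by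
  have hsum : b = (∑ i ∈ A, c i) + ∑ i ∈ B, (z i - lam) := by
    rw [← hg, ← Finset.sum_filter_add_sum_filter_not Finset.univ
      (fun i => c i ≤ z i - lam) (fun i => min (max (z i - lam) 0) (c i))]
    congr 1
    · rw [hA]
      refine Finset.sum_congr rfl fun i hi => ?_
      simp only [Finset.mem_filter] at hi
      have h1 := hc i
      rw [max_eq_left (by linarith), min_eq_right hi.2]
    · rw [← Finset.sum_filter_add_sum_filter_not _ (fun i => 0 < z i - lam)]
      have h0 : ∑ i ∈ (Finset.univ.filter (fun i => ¬ c i ≤ z i - lam)).filter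
          (fun i => ¬ 0 < z i - lam), min (max (z i - lam) 0) (c i) = 0 := by
        refine Finset.sum_eq_zero fun i hi => ?_
        simp only [Finset.mem_filter, not_lt] at hi
        have h1 := hc i
        rw [max_eq_right hi.2, min_eq_left (by linarith)]
      rw [h0, add_zero, hB]
      have hset : (Finset.univ.filter (fun i => ¬ c i ≤ z i - lam)).filter
          (fun i => 0 < z i - lam) =
          Finset.univ.filter (fun i => 0 < z i - lam ∧ z i - lam < c i) := by
        ext i
        simp only [Finset.mem_filter, Finset.mem_univ, true_and, not_le]
        tauto
      rw [hset]
      refine Finset.sum_congr rfl fun i hi => ?_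
      simp only [Finset.mem_filter] at hi
      rw [max_eq_left (le_of_lt hi.2.1), min_eq_left (le_of_lt hi.2.2)]
  have hcard : (0 : ℝ) < (B.card : ℝ) := by
    exact_mod_cast Finset.card_pos.mpr hBne
  rw [Finset.sum_sub_distrib, Finset.sum_const, nsmul_eq_mul] at hsum
  field_simp
  linarith
end

section
/- Let A be an N×N Hermitian positive definite complex matrix and B_1, …, B_n be N×N Hermitian positive semidefinite complex matrices, and for x ∈ ℝⁿ with x_i ≥ 0 for all i let Σ(x) = (A + Σ_{i=1}^n x_i B_i)⁻¹. Then the A-optimal metric f_A(x) = tr(Σ(x)) (real-valued since Σ(x) is Hermitian) is convex on the nonnegative orthant {x ∈ ℝⁿ | x_i ≥ 0 for all i}. -/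
/-!
For positive definite `P` and Hermitian `U`, expanding `0 ≤ tr((U - P⁻¹)ᴴ P (U - P⁻¹))` gives
`2 tr U - tr(U P U) ≤ tr P⁻¹`, with equality at `U = P⁻¹`. Hence `P ↦ tr P⁻¹` is a pointwise
supremum of affine functions of `P`, so it is convex on the positive definite cone, and the
theorem follows by composing with the affine map `x ↦ A + ∑ i, x i • B i`.
-/

open Matrix ComplexOrder

namespace Matrix

variable {ι 𝕜 : Type*} [RCLike 𝕜]

lemma convex_setOf_posDef : Convex ℝ {P : Matrix ι ι 𝕜 | P.PosDef} := by
  refine convex_iff_pairwise_pos.mpr fun P hP Q hQ _ a b ha hb _ => ?_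
  exact (hP.smul ha).add (hQ.smul hb)

variable [Fintype ι] [DecidableEq ι]

lemma PosDef.two_mul_re_trace_sub_le {P : Matrix ι ι 𝕜} (hP : P.PosDef) {U : Matrix ι ι 𝕜}
    (hU : U.IsHermitian) :
    2 * RCLike.re U.trace - RCLike.re (U * P * U).trace ≤ RCLike.re P⁻¹.trace := by
  have hPinv : P * P⁻¹ = 1 := mul_nonsing_inv _ ((isUnit_iff_isUnit_det _).1 hP.isUnit)
  have hinvP : P⁻¹ * P = 1 := nonsing_inv_mul _ ((isUnit_iff_isUnit_det _).1 hP.isUnit)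
  have hsq := (hP.posSemidef.conjTranspose_mul_mul_same (U - P⁻¹)).trace_nonneg
  have hexpand : (U - P⁻¹)ᴴ * P * (U - P⁻¹) = U * P * U - U - U + P⁻¹ := by
    rw [conjTranspose_sub, hU.eq, hP.inv.isHermitian.eq]
    simp only [sub_mul, mul_sub, Matrix.mul_assoc, hPinv, Matrix.mul_one]
    simp only [← Matrix.mul_assoc, hinvP, Matrix.one_mul]
    abel
  rw [hexpand, trace_add, trace_sub, trace_sub] at hsq
  have hre := (RCLike.nonneg_iff.mp hsq).1
  simp only [map_add, map_sub] at hre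
  linarith

lemma convexOn_re_trace_inv :
    ConvexOn ℝ {P : Matrix ι ι 𝕜 | P.PosDef} fun P => RCLike.re P⁻¹.trace := by
  refine convexOn_iff_forall_pos.mpr ⟨convex_setOf_posDef, fun P hP Q hQ a b ha hb hab => ?_⟩
  set S := a • P + b • Q
  have hS : S.PosDef := (hP.smul ha).add (hQ.smul hb)
  have hSinv : S⁻¹ * S = 1 := nonsing_inv_mul _ ((isUnit_iff_isUnit_det _).1 hS.isUnit)
  have hP' := hP.two_mul_re_trace_sub_le hS.inv.isHermitian
  have hQ' := hQ.two_mul_re_trace_sub_le hS.inv.isHermitian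
  have hsplit : RCLike.re (S⁻¹ * S * S⁻¹).trace
      = a * RCLike.re (S⁻¹ * P * S⁻¹).trace + b * RCLike.re (S⁻¹ * Q * S⁻¹).trace := by
    simp only [S, Matrix.mul_add, Matrix.add_mul, Matrix.mul_smul, Matrix.smul_mul, trace_add,
      trace_smul, map_add, RCLike.smul_re]
  rw [hSinv, Matrix.one_mul] at hsplit
  calc RCLike.re S⁻¹.trace = a * (2 * RCLike.re S⁻¹.trace - RCLike.re (S⁻¹ * P * S⁻¹).trace)
      + b * (2 * RCLike.re S⁻¹.trace - RCLike.re (S⁻¹ * Q * S⁻¹).trace) := by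
        linear_combination (2 * RCLike.re S⁻¹.trace) * hab.symm - hsplit
    _ ≤ a * RCLike.re P⁻¹.trace + b * RCLike.re Q⁻¹.trace := by gcongr

end Matrix

open Matrix ComplexOrder in
/-- The A-optimal metric `x ↦ tr((A + ∑ i, x i • B i)⁻¹)` is convex on the
nonnegative orthant. -/
theorem trace_convex (N n : ℕ)
    (A : Matrix (Fin N) (Fin N) ℂ) (hA : A.PosDef)
    (B : Fin n → Matrix (Fin N) (Fin N) ℂ) (hB : ∀ i, (B i).PosSemidef) :
    ConvexOn ℝ {x : Fin n → ℝ | ∀ i, 0 ≤ x i}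
      (fun x : Fin n → ℝ => (((A + ∑ i, x i • B i)⁻¹).trace).re) := by
  let g : (Fin n → ℝ) →ᵃ[ℝ] Matrix (Fin N) (Fin N) ℂ :=
    AffineMap.const ℝ _ A + (Fintype.linearCombination ℝ B).toAffineMap
  have hg : ∀ x, g x = A + ∑ i, x i • B i := fun x => by
    simp [g, Fintype.linearCombination_apply]
  have hpos : {x : Fin n → ℝ | ∀ i, 0 ≤ x i} ⊆ g ⁻¹' {P | P.PosDef} := fun x hx =>
    show (g x).PosDef from
      (hg x).symm ▸ hA.add_posSemidef (posSemidef_sum _ fun i _ => (hB i).smul (hx i))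
  simpa [Function.comp_def, hg] using
    (convexOn_re_trace_inv.comp_affineMap g).subset hpos (convex_Ici 0)
end

section
/- Let A be an N×N Hermitian positive definite complex matrix and B_1, …, B_n be N×N Hermitian positive semidefinite complex matrices, and for x ∈ ℝⁿ with x_i ≥ 0 for all i let Σ(x) = (A + Σ_{i=1}^n x_i B_i)⁻¹. Then the M-optimal metric f_M(x) = max_{1≤i≤N} (Σ(x))_{i,i}, the largest diagonal entry of Σ(x) (real-valued since the diagonal entries of a Hermitian matrix are real), is convex on the nonnegative orthant {x ∈ ℝⁿ | x_i ≥ 0 for all i}. -/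
/-!
Completing the square, for positive definite `M` and any `u`,
`v* M⁻¹ v - (2 Re u* v - u* M u) = w* M w ≥ 0` with `w = u - M⁻¹ v`, so
`Re v* M⁻¹ v = max_u (2 Re u* v - Re u* M u)` with the maximum attained at `u = M⁻¹ v`.
Every function under the maximum is affine in `M`, hence `M ↦ Re v* M⁻¹ v` is convex on the
positive definite cone. Taking `v = e_j` and composing with the affine map
`x ↦ A + ∑ i, x i • B i`, which sends the orthant into that cone, each diagonal entry of `Σ(x)`
is convex, and so is their maximum.
-/

open Matrix ComplexOrder

theorem ConvexOn.ciSup {E ι : Type*} [AddCommMonoid E] [Module ℝ E] [Finite ι]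
    {s : Set E} {f : ι → E → ℝ} (hs : Convex ℝ s) (hf : ∀ i, ConvexOn ℝ s (f i)) :
    ConvexOn ℝ s fun x => ⨆ i, f i x := by
  cases isEmpty_or_nonempty ι
  · simpa only [Real.iSup_of_isEmpty] using convexOn_const (0 : ℝ) hs
  refine ⟨hs, fun x hx y hy a b ha hb hab => ciSup_le fun i => ?_⟩
  calc f i (a • x + b • y) ≤ a * f i x + b * f i y := (hf i).2 hx hy ha hb hab
    _ ≤ a * (⨆ i, f i x) + b * ⨆ i, f i y := by
      gcongr <;> exact le_ciSup (Finite.bddAbove_range fun j => f j _) i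

theorem Convex.convexOn_of_forall_le_of_exists_eq {E ι : Type*} [AddCommMonoid E] [Module ℝ E]
    {s : Set E} {f : E → ℝ} {g : ι → E → ℝ} (hs : Convex ℝ s) (hg : ∀ i, ConvexOn ℝ s (g i))
    (hle : ∀ i, ∀ x ∈ s, g i x ≤ f x) (heq : ∀ x ∈ s, ∃ i, g i x = f x) : ConvexOn ℝ s f := by
  refine ⟨hs, fun x hx y hy a b ha hb hab => ?_⟩
  obtain ⟨i, hi⟩ := heq _ (hs hx hy ha hb hab)
  calc f (a • x + b • y) = g i (a • x + b • y) := hi.symm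
    _ ≤ a * g i x + b * g i y := (hg i).2 hx hy ha hb hab
    _ ≤ a * f x + b * f y := by gcongr <;> exact hle i _ ‹_›

namespace Matrix

theorem convex_setOf_posDef_s11 {n 𝕜 : Type*} [RCLike 𝕜] :
    Convex ℝ {M : Matrix n n 𝕜 | M.PosDef} := by
  intro M hM N hN a b ha hb hab
  rcases ha.eq_or_lt with rfl | ha
  · simpa [show b = 1 by linarith] using hN
  exact (hM.smul ha).add_posSemidef (hN.posSemidef.smul hb)

variable {n 𝕜 : Type*} [Fintype n] [DecidableEq n] [RCLike 𝕜]

theorem IsHermitian.star_sub_inv_mulVec_dotProduct {M : Matrix n n 𝕜}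
    (hM : M.IsHermitian) (hdet : IsUnit M.det) (u v : n → 𝕜) :
    star (u - M⁻¹ *ᵥ v) ⬝ᵥ M *ᵥ (u - M⁻¹ *ᵥ v) =
      star u ⬝ᵥ M *ᵥ u - star u ⬝ᵥ v - star v ⬝ᵥ u + star v ⬝ᵥ M⁻¹ *ᵥ v := by
  have hstar (w : n → 𝕜) : star (M⁻¹ *ᵥ v) ⬝ᵥ w = star v ⬝ᵥ M⁻¹ *ᵥ w := by
    rw [star_mulVec, ← dotProduct_mulVec, conjTranspose_nonsing_inv, hM.eq]
  rw [mulVec_sub, mulVec_mulVec, mul_nonsing_inv _ hdet, one_mulVec, star_sub, sub_dotProduct,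
    dotProduct_sub, dotProduct_sub, hstar, hstar, mulVec_mulVec, nonsing_inv_mul _ hdet,
    one_mulVec]
  ring

theorem convexOn_re_dotProduct_inv_mulVec (v : n → 𝕜) :
    ConvexOn ℝ {M : Matrix n n 𝕜 | M.PosDef} fun M => RCLike.re (star v ⬝ᵥ M⁻¹ *ᵥ v) := by
  let g (u : n → 𝕜) (M : Matrix n n 𝕜) : ℝ :=
    RCLike.re (star u ⬝ᵥ v + star v ⬝ᵥ u - star u ⬝ᵥ M *ᵥ u)
  have hsq {M : Matrix n n 𝕜} (hM : M.PosDef) (u : n → 𝕜) :=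
    hM.isHermitian.star_sub_inv_mulVec_dotProduct (M.isUnit_iff_isUnit_det.mp hM.isUnit) u v
  refine convex_setOf_posDef_s11.convexOn_of_forall_le_of_exists_eq (g := g) (fun u => ?_)
    (fun u M hM => ?_) (fun M hM => ⟨M⁻¹ *ᵥ v, ?_⟩)
  · refine ⟨convex_setOf_posDef_s11, fun M _ N _ a b _ _ hab => le_of_eq ?_⟩
    simp only [g, add_mulVec, smul_mulVec, dotProduct_add, dotProduct_smul, map_add, map_sub,
      RCLike.smul_re, smul_eq_mul]
    linear_combination -(RCLike.re (star u ⬝ᵥ v) + RCLike.re (star v ⬝ᵥ u)) * hab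
  · have hnonneg := RCLike.nonneg_iff.mp (hM.posSemidef.dotProduct_mulVec_nonneg (u - M⁻¹ *ᵥ v))
    rw [hsq hM] at hnonneg
    simp only [g, map_add, map_sub] at hnonneg ⊢
    linarith [hnonneg.1]
  · have := hsq hM (M⁻¹ *ᵥ v)
    simp only [sub_self, star_zero, zero_dotProduct] at this
    exact congrArg RCLike.re (by linear_combination this)

theorem convexOn_re_inv_apply_self (j : n) :
    ConvexOn ℝ {M : Matrix n n 𝕜 | M.PosDef} fun M => RCLike.re (M⁻¹ j j) := by
  simpa only [← Pi.single_star, star_one, single_one_dotProduct, mulVec_single_one,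
    col_apply] using convexOn_re_dotProduct_inv_mulVec (Pi.single j (1 : 𝕜))

end Matrix

open Matrix ComplexOrder in
theorem maxDiag_convex_general (N n : ℕ)
    (A : Matrix (Fin N) (Fin N) ℂ) (hA : A.PosDef)
    (B : Fin n → Matrix (Fin N) (Fin N) ℂ) (hB : ∀ i, (B i).PosSemidef) :
    ConvexOn ℝ {x : Fin n → ℝ | ∀ i, 0 ≤ x i}
      (fun x : Fin n → ℝ =>
        ⨆ j : Fin N, (((A + ∑ i, x i • B i)⁻¹) j j).re) := by
  let L : (Fin n → ℝ) →ᵃ[ℝ] Matrix (Fin N) (Fin N) ℂ :=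
    AffineMap.const ℝ _ A + (Fintype.linearCombination ℝ B).toAffineMap
  have hL (x : Fin n → ℝ) : L x = A + ∑ i, x i • B i := by
    simp [L, Fintype.linearCombination_apply]
  have hmaps : {x : Fin n → ℝ | ∀ i, 0 ≤ x i} ⊆ L ⁻¹' {M | M.PosDef} := fun x hx => by
    simpa only [Set.mem_preimage, hL, Set.mem_ofPred_eq] using
      hA.add_posSemidef (posSemidef_sum _ fun i _ => (hB i).smul (hx i))
  refine ConvexOn.ciSup (convex_Ici 0) fun j => ?_
  simpa only [Function.comp_def, hL, RCLike.re_to_complex] using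
    ((convexOn_re_inv_apply_self j).comp_affineMap L).subset hmaps (convex_Ici 0)

open Matrix ComplexOrder in
/-- The M-optimal metric `x ↦ max_j ((A + ∑ i, x i • B i)⁻¹)_{j,j}` is convex
on the nonnegative orthant. -/
theorem maxDiag_convex (N n : ℕ) (hN : 0 < N)
    (A : Matrix (Fin N) (Fin N) ℂ) (hA : A.PosDef)
    (B : Fin n → Matrix (Fin N) (Fin N) ℂ) (hB : ∀ i, (B i).PosSemidef) :
    ConvexOn ℝ {x : Fin n → ℝ | ∀ i, 0 ≤ x i}
      (fun x : Fin n → ℝ =>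
        ⨆ j : Fin N, (((A + ∑ i, x i • B i)⁻¹) j j).re) :=
  maxDiag_convex_general N n A hA B hB
end

section
/- Let Σ_p be an N×N Hermitian positive definite complex matrix, Σ_m an m×m Hermitian positive definite complex matrix, and C an m×N complex matrix. For an N×m complex matrix K, let Σ(K) = (I − K C) Σ_p (I − K C)^H + K Σ_m K^H. Let K* = Σ_p C^H (C Σ_p C^H + Σ_m)⁻¹. Then for every N×m complex matrix K, tr(Σ(K*)) ≤ tr(Σ(K)), and moreover Σ(K*) = (Σ_p⁻¹ + C^H Σ_m⁻¹ C)⁻¹. -/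
/-!
Write `S = C Σ_p Cᴴ + Σ_m`. The gain `K*` solves the normal equation `K* S = Σ_p Cᴴ`, and
completing the square gives `Σ(K) = Σ(K*) + (K − K*) S (K − K*)ᴴ` for every `K`, with
`Σ(K*) = Σ_p − K* C Σ_p`. The square term is positive semidefinite, hence has nonnegative trace,
and `Σ_p − Σ_p Cᴴ S⁻¹ C Σ_p` is the Woodbury expansion of `(Σ_p⁻¹ + Cᴴ Σ_m⁻¹ C)⁻¹`.
-/

open scoped ComplexOrder

namespace Matrix

variable {n m α : Type*} [Fintype n] [Fintype m] [DecidableEq n]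

def errorCov [Ring α] [StarRing α] (Sp : Matrix n n α) (Sm : Matrix m m α) (C : Matrix m n α)
    (K : Matrix n m α) : Matrix n n α :=
  (1 - K * C) * Sp * (1 - K * C)ᴴ + K * Sm * Kᴴ

section CommRing

variable [CommRing α] [StarRing α] {Sp : Matrix n n α} {Sm : Matrix m m α} {C : Matrix m n α}
  {K₀ : Matrix n m α}

theorem errorCov_eq_add_mul_mul_conjTranspose (hSp : Sp.IsHermitian) (hSm : Sm.IsHermitian)
    (hK₀ : K₀ * (C * Sp * Cᴴ + Sm) = Sp * Cᴴ) (K : Matrix n m α) :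
    errorCov Sp Sm C K =
      Sp - K₀ * C * Sp + (K - K₀) * (C * Sp * Cᴴ + Sm) * (K - K₀)ᴴ := by
  have hK₀' : (C * Sp * Cᴴ + Sm) * K₀ᴴ = C * Sp := by
    simpa [conjTranspose_mul, hSp.eq, hSm.eq, Matrix.mul_assoc] using congrArg conjTranspose hK₀
  have hcross : K * (C * Sp * Cᴴ + Sm) * K₀ᴴ = K * C * Sp := by
    rw [Matrix.mul_assoc, hK₀', Matrix.mul_assoc]
  have hself : K₀ * (C * Sp * Cᴴ + Sm) * K₀ᴴ = K₀ * C * Sp := by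
    rw [Matrix.mul_assoc, hK₀', Matrix.mul_assoc]
  simp only [conjTranspose_sub, Matrix.mul_sub, Matrix.sub_mul]
  rw [hcross, hself, hK₀]
  simp only [errorCov, conjTranspose_sub, conjTranspose_mul, conjTranspose_one,
    Matrix.mul_sub, Matrix.sub_mul, Matrix.mul_add, Matrix.add_mul, Matrix.mul_one,
    Matrix.one_mul, Matrix.mul_assoc]
  abel

theorem errorCov_eq_sub (hSp : Sp.IsHermitian) (hSm : Sm.IsHermitian)
    (hK₀ : K₀ * (C * Sp * Cᴴ + Sm) = Sp * Cᴴ) :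
    errorCov Sp Sm C K₀ = Sp - K₀ * C * Sp := by
  simpa using errorCov_eq_add_mul_mul_conjTranspose hSp hSm hK₀ K₀

end CommRing

theorem re_trace_errorCov_le {𝕜 : Type*} [RCLike 𝕜] {Sp : Matrix n n 𝕜} {Sm : Matrix m m 𝕜}
    {C : Matrix m n 𝕜} {K₀ : Matrix n m 𝕜} (hSp : Sp.PosSemidef) (hSm : Sm.PosSemidef)
    (hK₀ : K₀ * (C * Sp * Cᴴ + Sm) = Sp * Cᴴ) (K : Matrix n m 𝕜) :
    RCLike.re (errorCov Sp Sm C K₀).trace ≤ RCLike.re (errorCov Sp Sm C K).trace := by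
  have hS : (C * Sp * Cᴴ + Sm).PosSemidef := (hSp.mul_mul_conjTranspose_same C).add hSm
  have hsq := (RCLike.nonneg_iff.mp ((hS.mul_mul_conjTranspose_same (K - K₀)).trace_nonneg)).1
  rw [errorCov_eq_add_mul_mul_conjTranspose hSp.isHermitian hSm.isHermitian hK₀ K,
    errorCov_eq_sub hSp.isHermitian hSm.isHermitian hK₀, trace_add, map_add]
  linarith

/-- The Woodbury identity for `Σ_p⁻¹ + Cᴴ Σ_m⁻¹ C`. -/
theorem errorCov_eq_inv [DecidableEq m] [Field α] [StarRing α] {Sp : Matrix n n α}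
    {Sm : Matrix m m α} {C : Matrix m n α} (hSp : Sp.IsHermitian) (hSm : Sm.IsHermitian)
    (hSpu : IsUnit Sp) (hSmu : IsUnit Sm) (hS : IsUnit (C * Sp * Cᴴ + Sm)) :
    errorCov Sp Sm C (Sp * Cᴴ * (C * Sp * Cᴴ + Sm)⁻¹) = (Sp⁻¹ + Cᴴ * Sm⁻¹ * C)⁻¹ := by
  have hgain : Sp * Cᴴ * (C * Sp * Cᴴ + Sm)⁻¹ * (C * Sp * Cᴴ + Sm) = Sp * Cᴴ :=
    nonsing_inv_mul_cancel_right _ _ ((isUnit_iff_isUnit_det _).mp hS)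
  have hSpd := (isUnit_iff_isUnit_det Sp).mp hSpu
  have hSmd := (isUnit_iff_isUnit_det Sm).mp hSmu
  rw [errorCov_eq_sub hSp hSm hgain, add_mul_mul_inv_eq_sub _ _ _ _
    (isUnit_nonsing_inv_iff.mpr hSpu) (isUnit_nonsing_inv_iff.mpr hSmu),
    nonsing_inv_nonsing_inv _ hSpd, nonsing_inv_nonsing_inv _ hSmd, add_comm Sm]
  rwa [nonsing_inv_nonsing_inv _ hSpd, nonsing_inv_nonsing_inv _ hSmd, add_comm Sm]

end Matrix

open Matrix ComplexOrder in
/-- The gain `K* = Σ_p Cᴴ (C Σ_p Cᴴ + Σ_m)⁻¹` minimizes the trace of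
`Σ(K) = (I − K C) Σ_p (I − K C)ᴴ + K Σ_m Kᴴ` over all gains `K`, and
`Σ(K*) = (Σ_p⁻¹ + Cᴴ Σ_m⁻¹ C)⁻¹`. -/
theorem optimal_gain (N m : ℕ)
    (Sp : Matrix (Fin N) (Fin N) ℂ) (hSp : Sp.PosDef)
    (Sm : Matrix (Fin m) (Fin m) ℂ) (hSm : Sm.PosDef)
    (C : Matrix (Fin m) (Fin N) ℂ)
    (Kstar : Matrix (Fin N) (Fin m) ℂ)
    (hKstar : Kstar = Sp * Cᴴ * (C * Sp * Cᴴ + Sm)⁻¹) :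
    (∀ K : Matrix (Fin N) (Fin m) ℂ,
      ((((1 : Matrix (Fin N) (Fin N) ℂ) - Kstar * C) * Sp * ((1 : Matrix (Fin N) (Fin N) ℂ) - Kstar * C)ᴴ
          + Kstar * Sm * Kstarᴴ).trace).re ≤
      ((((1 : Matrix (Fin N) (Fin N) ℂ) - K * C) * Sp * ((1 : Matrix (Fin N) (Fin N) ℂ) - K * C)ᴴ
          + K * Sm * Kᴴ).trace).re) ∧
    ((1 : Matrix (Fin N) (Fin N) ℂ) - Kstar * C) * Sp * ((1 : Matrix (Fin N) (Fin N) ℂ) - Kstar * C)ᴴ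
        + Kstar * Sm * Kstarᴴ = (Sp⁻¹ + Cᴴ * Sm⁻¹ * C)⁻¹ := by
  subst hKstar
  have hS : (C * Sp * Cᴴ + Sm).PosDef :=
    PosDef.posSemidef_add (hSp.posSemidef.mul_mul_conjTranspose_same C) hSm
  have hgain : Sp * Cᴴ * (C * Sp * Cᴴ + Sm)⁻¹ * (C * Sp * Cᴴ + Sm) = Sp * Cᴴ :=
    nonsing_inv_mul_cancel_right _ _ ((isUnit_iff_isUnit_det _).mp hS.isUnit)
  exact ⟨re_trace_errorCov_le hSp.posSemidef hSm.posSemidef hgain,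
    errorCov_eq_inv hSp.isHermitian hSm.isHermitian hSp.isUnit hSm.isUnit hS.isUnit⟩
end

section
/- Let A be an N×N Hermitian positive definite complex matrix and B_1, …, B_n be N×N Hermitian positive semidefinite complex matrices, and for x ∈ ℝⁿ with x_i ≥ 0 for all i let Σ(x) = (A + Σ_{i=1}^n x_i B_i)⁻¹ and f_E(x) = λ_max(Σ(x)), the largest eigenvalue of Σ(x). Let x̃ be a point with x̃_i ≥ 0 for all i and let ũ ∈ ℂᴺ be a unit eigenvector of Σ(x̃) corresponding to λ_max(Σ(x̃)). Define g ∈ ℝⁿ by g_i = −ũ^H Σ(x̃) B_i Σ(x̃) ũ. Then g is a subgradient of f_E at x̃ over the nonnegative orthant: f_E(x) ≥ f_E(x̃) + ⟨g, x − x̃⟩ for all x with x_i ≥ 0 for all i. -/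
/-!
Write `Σ(x) = M(x)⁻¹` with `M(x) = A + ∑ xᵢ Bᵢ`, and `D = M(x) - M(x̃)`. Two applications of
`P⁻¹ - Q⁻¹ = P⁻¹ (Q - P) Q⁻¹` give
`Σ(x) - Σ(x̃) + Σ(x̃) D Σ(x̃) = Σ(x̃) D Σ(x) D Σ(x̃) ⪰ 0`,
i.e. matrix inversion lies above its tangent in the Loewner order. Evaluating this quadratic
form at `ũ`: the left side is at most `f_E(x) - f_E(x̃) - ⟨g, x - x̃⟩`, since `ũᴴ Σ(x) ũ ≤ f_E(x)`,
`ũᴴ Σ(x̃) ũ = f_E(x̃)`, and `ũᴴ Σ(x̃) D Σ(x̃) ũ = -⟨g, x - x̃⟩`.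
-/

open scoped ComplexOrder

namespace Matrix

section PosDef

variable {m ι 𝕜 : Type*} [Fintype ι] [RCLike 𝕜]

theorem PosDef.add_sum_smul {A : Matrix m m 𝕜} (hA : A.PosDef) {B : ι → Matrix m m 𝕜}
    (hB : ∀ i, (B i).PosSemidef) {x : ι → ℝ} (hx : ∀ i, 0 ≤ x i) :
    (A + ∑ i, x i • B i).PosDef :=
  hA.add_posSemidef <| posSemidef_sum _ fun i _ => (hB i).smul (hx i)

variable [Fintype m] [DecidableEq m]

theorem inv_mul_sub_mul_inv_mul_sub_mul_inv {M₀ M₁ : Matrix m m 𝕜} (h₀ : IsUnit M₀)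
    (h₁ : IsUnit M₁) :
    M₀⁻¹ * (M₁ - M₀) * M₁⁻¹ * (M₁ - M₀) * M₀⁻¹ = M₁⁻¹ - M₀⁻¹ + M₀⁻¹ * (M₁ - M₀) * M₀⁻¹ := by
  have e₀ : M₀⁻¹ * (M₁ - M₀) * M₁⁻¹ = M₀⁻¹ - M₁⁻¹ := (inv_sub_inv (iff_of_true h₀ h₁)).symm
  have e₁ : M₁⁻¹ * (M₁ - M₀) * M₀⁻¹ = M₀⁻¹ - M₁⁻¹ := by
    rw [← neg_sub M₀ M₁, mul_neg, neg_mul, ← inv_sub_inv (iff_of_true h₁ h₀), neg_sub]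
  rw [e₀, sub_mul, sub_mul, e₁]
  abel

open scoped MatrixOrder in
theorem PosDef.inv_sub_inv_mul_sub_mul_inv_le_inv {M₀ M₁ : Matrix m m 𝕜} (h₀ : M₀.PosDef)
    (h₁ : M₁.PosDef) : M₀⁻¹ - M₀⁻¹ * (M₁ - M₀) * M₀⁻¹ ≤ M₁⁻¹ := by
  have hD : (M₁ - M₀)ᴴ = M₁ - M₀ := (h₁.isHermitian.sub h₀.isHermitian).eq
  have hquad := h₁.inv.posSemidef.conjTranspose_mul_mul_same ((M₁ - M₀) * M₀⁻¹)
  rw [conjTranspose_mul, hD, h₀.inv.isHermitian.eq, ← Matrix.mul_assoc,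
    inv_mul_sub_mul_inv_mul_sub_mul_inv h₀.isUnit h₁.isUnit] at hquad
  rw [le_iff]
  convert hquad using 1
  abel

end PosDef

variable {m : Type*} [Fintype m]

theorem star_dotProduct_self_eq_sum_normSq (u : m → ℂ) :
    star u ⬝ᵥ u = ∑ j, (Complex.normSq (u j) : ℂ) := by
  simp only [dotProduct, Pi.star_apply, Complex.star_def, Complex.normSq_eq_conj_mul_self]

theorem isCompact_setOf_sum_normSq_eq_one :
    IsCompact {u : m → ℂ | ∑ j, Complex.normSq (u j) = 1} := by
  refine Metric.isCompact_of_isClosed_isBounded (isClosed_eq (by fun_prop) continuous_const) ?_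
  refine (Metric.isBounded_closedBall (x := 0) (r := 1)).subset fun u hu => ?_
  rw [mem_closedBall_zero_iff, pi_norm_le_iff_of_nonneg zero_le_one]
  intro j
  have hj := Finset.single_le_sum (fun k _ => Complex.normSq_nonneg (u k)) (Finset.mem_univ j)
  rw [hu, Complex.normSq_eq_norm_sq] at hj
  exact (sq_le_one_iff₀ (norm_nonneg _)).1 hj

theorem bddAbove_range_re_star_dotProduct_mulVec (P : Matrix m m ℂ) :
    BddAbove (Set.range fun u : {u : m → ℂ // ∑ j, Complex.normSq (u j) = 1} =>
      (star (u : m → ℂ) ⬝ᵥ P *ᵥ (u : m → ℂ)).re) := by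
  have hcont : Continuous fun u : m → ℂ => (star u ⬝ᵥ P *ᵥ u).re := by fun_prop
  have := isCompact_setOf_sum_normSq_eq_one.bddAbove_image hcont.continuousOn
  rwa [Set.image_eq_range] at this

@[simps]
def reQuadForm (u : m → ℂ) : Matrix m m ℂ →ₗ[ℝ] ℝ where
  toFun P := (star u ⬝ᵥ P *ᵥ u).re
  map_add' P Q := by simp [add_mulVec, dotProduct_add]
  map_smul' c P := by simp [smul_mulVec, dotProduct_smul]

end Matrix

open Matrix ComplexOrder in
/-- A subgradient of the E-optimal metric `f_E(x) = λ_max((A + ∑ i, x i • B i)⁻¹)`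
(expressed as the supremum of the Rayleigh quotient over unit vectors) at a point
`x̃` of the nonnegative orthant: if `ũ` is a unit eigenvector of `Σ(x̃)` for the
eigenvalue `λ_max(Σ(x̃)) = f_E(x̃)`, then `g` with
`g i = −ũᴴ Σ(x̃) B i Σ(x̃) ũ` is a subgradient of `f_E` at `x̃`. -/
theorem lambdaMax_subgradient (N n : ℕ)
    (A : Matrix (Fin N) (Fin N) ℂ) (hA : A.PosDef)
    (B : Fin n → Matrix (Fin N) (Fin N) ℂ) (hB : ∀ i, (B i).PosSemidef)
    (fE : (Fin n → ℝ) → ℝ)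
    (hfE : ∀ x : Fin n → ℝ, fE x =
      ⨆ u : {u : Fin N → ℂ // ∑ j, Complex.normSq (u j) = 1},
        (star (u : Fin N → ℂ) ⬝ᵥ
          ((A + ∑ i, x i • B i)⁻¹).mulVec (u : Fin N → ℂ)).re)
    (xt : Fin n → ℝ) (hxt : ∀ i, 0 ≤ xt i)
    (ut : Fin N → ℂ) (hut : ∑ j, Complex.normSq (ut j) = 1)
    (heig : ((A + ∑ j, xt j • B j)⁻¹).mulVec ut = (fE xt : ℂ) • ut)
    (g : Fin n → ℝ)
    (hg : ∀ i, g i =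
      -(star ut ⬝ᵥ
          ((A + ∑ j, xt j • B j)⁻¹ * B i * (A + ∑ j, xt j • B j)⁻¹).mulVec ut).re) :
    ∀ x : Fin n → ℝ, (∀ i, 0 ≤ x i) →
      fE xt + ∑ i, g i * (x i - xt i) ≤ fE x := by
  intro x hx
  set M₀ := A + ∑ j, xt j • B j
  set M₁ := A + ∑ j, x j • B j
  have hunit : star ut ⬝ᵥ ut = 1 := by
    rw [star_dotProduct_self_eq_sum_normSq]; exact_mod_cast hut
  have hval : reQuadForm ut M₀⁻¹ = fE xt := by
    simp [heig, dotProduct_smul, hunit]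
  have hsup : reQuadForm ut M₁⁻¹ ≤ fE x := by
    rw [hfE x]
    exact le_ciSup (bddAbove_range_re_star_dotProduct_mulVec M₁⁻¹) ⟨ut, hut⟩
  have hgrad : reQuadForm ut (M₀⁻¹ * (M₁ - M₀) * M₀⁻¹) = -∑ i, g i * (x i - xt i) := by
    have hD : M₁ - M₀ = ∑ i, (x i - xt i) • B i := by
      simp only [M₀, M₁, sub_smul, Finset.sum_sub_distrib, add_sub_add_left_eq_sub]
    simp only [hD, Finset.mul_sum, Finset.sum_mul, Matrix.mul_smul, Matrix.smul_mul, map_sum,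
      map_smul, hg]
    simp [Finset.sum_neg_distrib, mul_comm]
  have htangent := le_iff.1 ((hA.add_sum_smul hB hxt).inv_sub_inv_mul_sub_mul_inv_le_inv
    (hA.add_sum_smul hB hx)) |>.re_dotProduct_nonneg ut
  change 0 ≤ reQuadForm ut _ at htangent
  rw [map_sub, map_sub] at htangent
  linarith
end
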